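/- Let V : ℝ → ℝ be even, non-negative, non-increasing on (0,∞), integrable with finite first moment, let a := ∫₀^∞ V, and for γ > 0 define h_γ(x) := (1/(2aγ)) ∫₀^∞ [V(y + 2γ√a − x) − V(y + x)] y dy. Then for all γ ≥ 1 and all x ∈ [√γ, 2γ√a − √γ] one has |h_γ(x)| ≤ σ(γ)/γ, where σ(γ) := (1/(2a)) ∫_{√γ}^∞ z V(z) dz, and σ(γ) → 0 as γ → ∞. -/

import Mathlib

/-!
The substitution `z = y + c` turns the shifted moment `∫₀^∞ V(y + c) y dy` into
`∫_c^∞ (z - c) V(z) dz`, which lies between `0` and the tail moment `∫_{√γ}^∞ z V(z) dz` as soon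
as `c ≥ √γ`. For `x ∈ [√γ, 2γ√a - √γ]` both shifts `x` and `2γ√a - x` occurring in `h_γ` are
`≥ √γ`, so the difference of the two shifted moments is at most the tail moment, which is
`2aσ(γ)`. Finally `σ(γ) → 0` since tails of the integrable function `z V(z)` vanish.
-/

open MeasureTheory Set Filter
open scoped ENNReal Topology

noncomputable section

/-- The auxiliary boundary function
`h_γ(x) = (1/(2aγ)) ∫₀^∞ [V(y + 2γ√a − x) − V(y + x)] y dy`. -/
def hGam (V : ℝ → ℝ) (a γ x : ℝ) : ℝ :=
  (1 / (2 * a * γ)) *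
    ∫ y in Ioi (0 : ℝ), (V (y + 2 * γ * Real.sqrt a - x) - V (y + x)) * y

/-- `σ(γ) = (1/(2a)) ∫_{√γ}^∞ z V(z) dz`. -/
def sigmaGam (V : ℝ → ℝ) (a γ : ℝ) : ℝ :=
  (1 / (2 * a)) * ∫ z in Ioi (Real.sqrt γ), z * V z

section ShiftedMoment

variable {f : ℝ → ℝ} {s c : ℝ}

theorem setIntegral_Ioi_zero_comp_add_mul :
    ∫ y in Ioi (0 : ℝ), f (y + c) * y = ∫ z in Ioi c, (z - c) * f z := by
  have h := (measurePreserving_add_right volume c).setIntegral_preimage_emb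
    (measurableEmbedding_addRight c) (fun z => (z - c) * f z) (Ioi c)
  simpa [mul_comm] using h

theorem integrableOn_Ioi_zero_comp_add_mul_iff :
    IntegrableOn (fun y => f (y + c) * y) (Ioi 0) ↔
      IntegrableOn (fun z => (z - c) * f z) (Ioi c) := by
  have h := (measurePreserving_add_right volume c).integrableOn_comp_preimage
    (measurableEmbedding_addRight c) (f := fun z => (z - c) * f z) (s := Ioi c)
  simpa [Function.comp_def, mul_comm] using h

/-- On `(c, ∞)` with `c ≥ 0`, `(z - c) f z = (1 - c / z) · z f z` and `0 ≤ 1 - c / z ≤ 1`. -/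
theorem integrableOn_Ioi_sub_mul (hc : 0 ≤ c) (h : IntegrableOn (fun z => z * f z) (Ioi c)) :
    IntegrableOn (fun z => (z - c) * f z) (Ioi c) := by
  have hbdd : IntegrableOn (fun z => (1 - c / z) * (z * f z)) (Ioi c) := by
    refine Integrable.bdd_mul (c := 1) h (by fun_prop) ?_
    filter_upwards [self_mem_ae_restrict measurableSet_Ioi] with z hz
    have hz0 : 0 < z := hc.trans_lt hz
    rw [Real.norm_eq_abs, abs_le]
    constructor
    · nlinarith [div_le_one_of_le₀ (mem_Ioi.mp hz).le hz0.le]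
    · linarith [div_nonneg hc hz0.le]
  refine hbdd.congr_fun (fun z hz => ?_) measurableSet_Ioi
  have hz0 : z ≠ 0 := (hc.trans_lt hz).ne'
  field_simp

theorem setIntegral_Ioi_sub_mul_le (hf : 0 ≤ f) (hs : 0 ≤ s) (hsc : s ≤ c)
    (h : IntegrableOn (fun z => z * f z) (Ioi s)) :
    ∫ z in Ioi c, (z - c) * f z ≤ ∫ z in Ioi s, z * f z := by
  calc ∫ z in Ioi c, (z - c) * f z ≤ ∫ z in Ioi c, z * f z := by
        refine integral_mono_of_nonneg ?_ (h.mono_set (Ioi_subset_Ioi hsc)) ?_ <;>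
          filter_upwards [self_mem_ae_restrict measurableSet_Ioi] with z hz
        · exact mul_nonneg (sub_nonneg.mpr (mem_Ioi.mp hz).le) (hf z)
        · exact mul_le_mul_of_nonneg_right (by linarith [hs.trans hsc]) (hf z)
    _ ≤ ∫ z in Ioi s, z * f z := by
        refine setIntegral_mono_set h ?_ (Ioi_subset_Ioi hsc).eventuallyLE
        filter_upwards [self_mem_ae_restrict measurableSet_Ioi] with z hz
        exact mul_nonneg (hs.trans (mem_Ioi.mp hz).le) (hf z)

theorem abs_setIntegral_Ioi_zero_sub_comp_add_mul_le (hf : 0 ≤ f) (hs : 0 ≤ s)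
    (h : IntegrableOn (fun z => z * f z) (Ioi s)) {x x' : ℝ} (hx : s ≤ x) (hx' : s ≤ x') :
    |∫ y in Ioi (0 : ℝ), (f (y + x) - f (y + x')) * y| ≤ ∫ z in Ioi s, z * f z := by
  have hmoment : ∀ c, s ≤ c →
      IntegrableOn (fun y => f (y + c) * y) (Ioi 0) ∧
      0 ≤ ∫ y in Ioi (0 : ℝ), f (y + c) * y ∧
      ∫ y in Ioi (0 : ℝ), f (y + c) * y ≤ ∫ z in Ioi s, z * f z := by
    intro c hsc
    rw [integrableOn_Ioi_zero_comp_add_mul_iff, setIntegral_Ioi_zero_comp_add_mul]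
    refine ⟨integrableOn_Ioi_sub_mul (hs.trans hsc) (h.mono_set (Ioi_subset_Ioi hsc)), ?_,
      setIntegral_Ioi_sub_mul_le hf hs hsc h⟩
    refine setIntegral_nonneg measurableSet_Ioi fun z hz => ?_
    exact mul_nonneg (sub_nonneg.mpr (mem_Ioi.mp hz).le) (hf z)
  obtain ⟨hint, hnonneg, hle⟩ := hmoment x hx
  obtain ⟨hint', hnonneg', hle'⟩ := hmoment x' hx'
  simp_rw [sub_mul]
  rw [integral_sub hint hint']
  exact abs_sub_le_of_nonneg_of_le hnonneg hle hnonneg' hle'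

end ShiftedMoment

theorem stmt4 (V : ℝ → ℝ) (hVnonneg : ∀ x, 0 ≤ V x)
    (hVmom : Integrable (fun x => |x| * V x)) (a : ℝ)
    (ha : a = ∫ x in Ioi (0 : ℝ), V x) :
    (∀ γ : ℝ, 1 ≤ γ →
      ∀ x ∈ Icc (Real.sqrt γ) (2 * γ * Real.sqrt a - Real.sqrt γ),
        |hGam V a γ x| ≤ sigmaGam V a γ / γ) ∧
    Tendsto (fun γ => sigmaGam V a γ) atTop (𝓝 0) := by
  refine ⟨fun γ hγ x hx => ?_, ?_⟩
  · have ha0 : 0 ≤ a := ha ▸ setIntegral_nonneg measurableSet_Ioi fun x _ => hVnonneg x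
    have hγ0 : 0 < γ := by linarith
    have hmom : IntegrableOn (fun z => z * V z) (Ioi √γ) :=
      hVmom.integrableOn.congr_fun (fun z hz => by
        simp only [abs_of_pos ((Real.sqrt_nonneg γ).trans_lt hz)]) measurableSet_Ioi
    have hbound := abs_setIntegral_Ioi_zero_sub_comp_add_mul_le hVnonneg (Real.sqrt_nonneg γ)
      hmom (x := 2 * γ * √a - x) (x' := x) (by linarith [hx.2]) hx.1
    have hscale : 0 ≤ 1 / (2 * a * γ) := by positivity
    simp_rw [hGam, add_sub_assoc, abs_mul, sigmaGam, abs_of_nonneg hscale]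
    calc 1 / (2 * a * γ) * |∫ y in Ioi (0 : ℝ), (V (y + (2 * γ * √a - x)) - V (y + x)) * y|
        ≤ 1 / (2 * a * γ) * ∫ z in Ioi √γ, z * V z := by gcongr
      _ = 1 / (2 * a) * (∫ z in Ioi √γ, z * V z) / γ := by ring
  · simpa [sigmaGam] using
      (tendsto_integral_Ioi_zero Real.tendsto_sqrt_atTop (f := fun z => z * V z)).const_mul (1 / (2 * a))

end
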